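/- Assume t < q. There exists a nonzero codeword of C_{r,t} of Hamming weight exactly t + 2; hence the minimum distance of C_{r,t} is exactly t + 2, and the code C_{r,t} has parameters [n, n − r^t, t + 2]. -/

import Mathlib

set_option maxHeartbeats 1000000
open Finset Polynomial
universe u

lemma mygeom_lt {q : ℕ} (hq : 2 ≤ q) : ∀ m : ℕ, ∑ i ∈ range m, q ^ i < q ^ m := by
  intro m
  induction m with
  | zero => simp
  | succ m ih =>
    rw [Finset.sum_range_succ]
    have h1 : 1 ≤ q ^ m := Nat.one_le_pow _ _ (by omega)
    calc ∑ i ∈ range m, q ^ i + q ^ m < q ^ m + q ^ m := by omega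
    _ ≤ q ^ m * q := by nlinarith
    _ = q ^ (m+1) := by ring

lemma digit_lemma {q : ℕ} (hq : 2 ≤ q) (S : Finset ℕ) (j : ℕ) :
    (∑ i ∈ S, q ^ i) / q ^ j % q = if j ∈ S then 1 else 0 := by
  classical
  rw [← Finset.sum_filter_add_sum_filter_not S (· < j)]
  have hA : ∑ i ∈ S.filter (· < j), q ^ i < q ^ j := by
    calc ∑ i ∈ S.filter (· < j), q ^ i ≤ ∑ i ∈ range j, q ^ i := by
          apply Finset.sum_le_sum_of_subset
          intro x hx
          simp only [Finset.mem_filter, Finset.mem_range] at *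
          exact hx.2
    _ < q ^ j := mygeom_lt hq j
  have hB : ∑ i ∈ S.filter (fun i => ¬ i < j), q ^ i
      = q ^ j * ∑ i ∈ S.filter (fun i => ¬ i < j), q ^ (i - j) := by
    rw [Finset.mul_sum]
    apply Finset.sum_congr rfl
    intro i hi
    simp only [Finset.mem_filter, not_lt] at hi
    rw [← pow_add]
    congr 1
    omega
  rw [hB, Nat.add_mul_div_left _ _ (pow_pos (by omega : 0 < q) j), Nat.div_eq_of_lt hA,
    zero_add]
  -- now compute (∑ i ∈ filter, q^(i-j)) % q
  have hsplit : S.filter (fun i => ¬ i < j) = (S.filter (fun i => i = j)) ∪ (S.filter (fun i => j < i)) := by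
    ext x; by_cases hx : x ∈ S <;> simp only [Finset.mem_filter, Finset.mem_union, hx, true_and, false_and, or_self] <;> omega
  have hdisj : Disjoint (S.filter (fun i => i = j)) (S.filter (fun i => j < i)) := by
    rw [Finset.disjoint_left]; intro x hx hx'
    simp only [Finset.mem_filter] at *; omega
  rw [hsplit, Finset.sum_union hdisj]
  have h1 : ∑ i ∈ S.filter (fun i => i = j), q ^ (i - j) = if j ∈ S then 1 else 0 := by
    by_cases hj : j ∈ S
    · rw [if_pos hj]
      have : S.filter (fun i => i = j) = {j} := by
        ext x; simp only [Finset.mem_filter, Finset.mem_singleton]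
        constructor
        · rintro ⟨_, rfl⟩; rfl
        · rintro rfl; exact ⟨hj, rfl⟩
      rw [this]; simp
    · rw [if_neg hj]
      have : S.filter (fun i => i = j) = ∅ := by
        ext x; simp only [Finset.mem_filter, Finset.notMem_empty, iff_false]
        rintro ⟨hx, rfl⟩; exact hj hx
      rw [this]; simp
  have h2 : ∑ i ∈ S.filter (fun i => j < i), q ^ (i - j) =
      q * ∑ i ∈ S.filter (fun i => j < i), q ^ (i - j - 1) := by
    rw [Finset.mul_sum]
    apply Finset.sum_congr rfl
    intro i hi
    simp only [Finset.mem_filter] at hi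
    rw [← pow_succ']
    congr 1
    omega
  rw [h1, h2, Nat.add_mul_mod_self_left]
  split <;> simp [Nat.mod_eq_of_lt (by omega : 1 < q)]

lemma sum_pow_inj {q : ℕ} (hq : 2 ≤ q) (S T : Finset ℕ)
    (h : ∑ i ∈ S, q ^ i = ∑ i ∈ T, q ^ i) : S = T := by
  ext j
  have := digit_lemma hq S j
  rw [h, digit_lemma hq T j] at this
  by_cases hS : j ∈ S <;> by_cases hT : j ∈ T <;> simp_all


lemma lagrange_sum {F : Type*} [Field F] {m : ℕ} (c : Fin (m+1) → F)
    (hc : Function.Injective c) (k : ℕ) (hk : k ≤ m) :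
    ∑ j : Fin (m+1), (∏ l ∈ Finset.univ.erase j, (c j - c l)⁻¹) * c j ^ k
      = if k = m then 1 else 0 := by
  classical
  have hinj : Set.InjOn c (Finset.univ : Finset (Fin (m+1))) := hc.injOn
  have hcard : #(Finset.univ : Finset (Fin (m+1))) = m + 1 := by simp
  have hX : (X ^ k : F[X]) = Lagrange.interpolate Finset.univ c (fun j => c j ^ k) := by
    apply Lagrange.eq_interpolate_of_eval_eq _ hinj
    · rw [hcard, degree_X_pow]
      exact_mod_cast Nat.lt_succ_of_le hk
    · intro i _; simp
  have hco := congrArg (fun p => Polynomial.coeff p m) hX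
  simp only [coeff_X_pow] at hco
  rw [Lagrange.interpolate_apply, finset_sum_coeff] at hco
  have hbasis : ∀ j : Fin (m+1), (Lagrange.basis Finset.univ c j).coeff m
      = ∏ l ∈ Finset.univ.erase j, (c j - c l)⁻¹ := by
    intro j
    have hnd : (Lagrange.basis Finset.univ c j).natDegree = m := by
      rw [Lagrange.natDegree_basis hinj (mem_univ j), hcard]
      omega
    have hlc : (Lagrange.basis Finset.univ c j).coeff m
        = (Lagrange.basis Finset.univ c j).leadingCoeff := by
      rw [Polynomial.leadingCoeff, hnd]
    rw [hlc, Lagrange.basis, leadingCoeff_prod]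
    apply Finset.prod_congr rfl
    intro l hl
    have hne : c j ≠ c l := fun h => (mem_erase.mp hl).1 (hc h).symm
    rw [Lagrange.basisDivisor, leadingCoeff_mul, leadingCoeff_C,
      (monic_X_sub_C (c l)).leadingCoeff, mul_one]
  simp only [coeff_C_mul, hbasis] at hco
  have : (if m = k then (1:F) else 0) = (if k = m then 1 else 0) := by
    by_cases h : k = m <;> simp [h, Ne.symm, eq_comm]
  rw [← this, hco]
  apply Finset.sum_congr rfl
  intro j _
  ring


lemma exists_char_pow (F : Type*) [Field F] [Fintype F] {q t : ℕ} (ht : 1 ≤ t)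
    (hF : Fintype.card F = q ^ t) :
    ∃ p k : ℕ, p.Prime ∧ CharP F p ∧ q = p ^ k := by
  obtain ⟨p, hc⟩ := CharP.exists F
  haveI := hc
  obtain ⟨n, hp, hcard⟩ := FiniteField.card F p
  have hdvd : q ∣ p ^ (n : ℕ) := by
    rw [← hcard, hF]
    exact dvd_pow_self q (by omega)
  obtain ⟨k, _, hk⟩ := (Nat.dvd_prime_pow hp).mp hdvd
  exact ⟨p, k, hp, hc, hk⟩

lemma frob_sum {F : Type*} [Field F] {p k : ℕ} (hp : Fact p.Prime) (hc : CharP F p)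
    {q : ℕ} (hq : q = p ^ k) {γ : Type*} (s : Finset γ) (g : γ → F) (i : ℕ) :
    (∑ x ∈ s, g x) ^ q ^ i = ∑ x ∈ s, g x ^ q ^ i := by
  classical
  have hqi : q ^ i = p ^ (k * i) := by rw [hq, ← pow_mul]
  rw [hqi]
  induction s using Finset.cons_induction with
  | empty =>
    simp [zero_pow (pow_ne_zero _ hp.out.pos.ne')]
  | cons a s ha ih =>
    rw [Finset.sum_cons, Finset.sum_cons, add_pow_char_pow, ih]

lemma pow_q_pow_fixed {F : Type*} [Field F] {q : ℕ} {c : F} (hc : c ^ q = c) :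
    ∀ m : ℕ, c ^ q ^ m = c := by
  intro m
  induction m with
  | zero => simp
  | succ m ih => rw [pow_succ, pow_mul, ih, hc]

lemma exists_fixed (F : Type*) [Field F] [Fintype F] [DecidableEq F] {q t : ℕ}
    (ht : 1 ≤ t) (hq2 : 2 ≤ q) (htq : t < q) (hF : Fintype.card F = q ^ t) :
    ∃ c : Fin (t + 1) → F, Function.Injective c ∧ ∀ j, c j ^ q = c j := by
  classical
  obtain ⟨p, k, hp, hc, hqpk⟩ := exists_char_pow F ht hF
  haveI : Fact p.Prime := ⟨hp⟩
  haveI := hc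
  set ψ : F →+ F := AddMonoidHom.mk' (fun x => x ^ q - x) (by
    intro x y
    have : (x + y) ^ q = x ^ q + y ^ q := by
      rw [hqpk]; exact add_pow_char_pow x y p k
    rw [this]; ring) with hψ
  set s : Finset F := Finset.univ.filter (fun x => x ^ q = x) with hs
  -- the kernel of ψ as a set is ↑s
  have hker : (ψ.ker : Set F) = ↑s := by
    ext x
    simp only [AddMonoidHom.mem_ker, SetLike.mem_coe, Finset.coe_filter, Set.mem_setOf_eq,
      Finset.mem_univ, true_and, hψ, AddMonoidHom.mk'_apply, sub_eq_zero, hs]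
  -- the polynomial h
  set h : F[X] := ∑ i ∈ Finset.range t, (X : F[X]) ^ q ^ i with hh
  have hcoeff : h.coeff (q ^ (t - 1)) = 1 := by
    rw [hh, finset_sum_coeff]
    rw [Finset.sum_eq_single (t - 1)]
    · simp [coeff_X_pow]
    · intro i hi hne
      rw [coeff_X_pow, if_neg]
      intro hEq
      exact hne ((Nat.pow_right_injective hq2 hEq.symm))
    · intro hmem
      exact absurd (Finset.mem_range.mpr (by omega)) hmem
  have hne : h ≠ 0 := fun h0 => by simp [h0] at hcoeff
  have hdeg : h.natDegree ≤ q ^ (t - 1) := by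
    rw [hh]
    apply Polynomial.natDegree_sum_le_of_forall_le
    intro i hi
    rw [natDegree_X_pow]
    exact Nat.pow_le_pow_right (by omega) (by simp at hi; omega)
  -- every element of range ψ is a root of h
  have hroot : ∀ y : F, h.eval (ψ y) = 0 := by
    intro y
    rw [hh]
    rw [eval_finset_sum]
    have : ∀ i ∈ Finset.range t, ((X : F[X]) ^ q ^ i).eval (ψ y)
        = y ^ q ^ (i + 1) - y ^ q ^ i := by
      intro i _
      rw [eval_pow, eval_X, hψ]
      have hsub : (y ^ q - y) ^ q ^ i = (y ^ q) ^ q ^ i - y ^ q ^ i := by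
        have : q ^ i = p ^ (k * i) := by rw [hqpk, ← pow_mul]
        rw [this]
        exact sub_pow_char_pow _ _ _
      simp only [AddMonoidHom.mk'_apply]
      rw [hsub, ← pow_mul, ← pow_succ']
    rw [Finset.sum_congr rfl this, Finset.sum_range_sub (fun i => y ^ q ^ i)]
    rw [pow_zero, pow_one, ← hF, FiniteField.pow_card, sub_self]
  -- counting
  have hcount : Nat.card F = Nat.card (F ⧸ ψ.ker) * Nat.card ψ.ker :=
    AddSubgroup.card_eq_card_quotient_mul_card_addSubgroup ψ.ker
  have hquot : Nat.card (F ⧸ ψ.ker) = Nat.card ψ.range :=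
    Nat.card_congr (QuotientAddGroup.quotientKerEquivRange ψ).toEquiv
  have hrange_le : Nat.card ψ.range ≤ q ^ (t - 1) := by
    have hsub : (ψ.range : Set F) ⊆ ↑h.roots.toFinset := by
      rintro x ⟨y, rfl⟩
      simp only [Finset.coe_sort_coe, Multiset.mem_toFinset, Finset.mem_coe]
      rw [Polynomial.mem_roots hne]
      exact hroot y
    calc Nat.card ψ.range = (ψ.range : Set F).ncard := (Nat.card_coe_set_eq _)
      _ ≤ (↑h.roots.toFinset : Set F).ncard := Set.ncard_le_ncard hsub (Set.toFinite _)
      _ = h.roots.toFinset.card := by rw [Set.ncard_coe_finset]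
      _ ≤ Multiset.card h.roots := Multiset.toFinset_card_le _
      _ ≤ h.natDegree := Polynomial.card_roots' h
      _ ≤ q ^ (t - 1) := hdeg
  have hkercard : Nat.card ψ.ker = s.card := by
    have : Nat.card ψ.ker = (ψ.ker : Set F).ncard := (Nat.card_coe_set_eq _)
    rw [this, hker, Set.ncard_coe_finset]
  have hcardF : Nat.card F = q ^ t := by rw [Nat.card_eq_fintype_card, hF]
  have hqle : q ≤ s.card := by
    have h1 : q ^ t ≤ q ^ (t - 1) * s.card := by
      rw [← hcardF, hcount, hquot, hkercard]
      exact Nat.mul_le_mul_right _ hrange_le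
    have h2 : q ^ t = q ^ (t - 1) * q := by
      rw [← pow_succ]; congr 1; omega
    rw [h2] at h1
    exact Nat.le_of_mul_le_mul_left h1 (pow_pos (by omega : 0 < q) _)
  -- extract t+1 distinct elements
  have hle : t + 1 ≤ s.card := by omega
  refine ⟨fun j => (s.equivFin.symm (Fin.castLE hle j)).val, ?_, ?_⟩
  · intro a b hab
    have := s.equivFin.symm.injective (Subtype.val_injective hab)
    exact Fin.castLE_injective hle this
  · intro j
    have hmem : (s.equivFin.symm (Fin.castLE hle j)).val
        ∈ Finset.univ.filter (fun x => x ^ q = x) := (s.equivFin.symm (Fin.castLE hle j)).property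
    exact (Finset.mem_filter.mp hmem).2



section
variable {F : Type u} [Field F] [Fintype F] [DecidableEq F]
variable {q t r n : ℕ}

noncomputable def Dexp (q : ℕ) {t : ℕ} {κ : Type*} [DecidableEq κ] (f : Fin t → κ) : κ →₀ ℕ :=
  ∑ i : Fin t, Finsupp.single (f i) (q ^ (i : ℕ))

lemma Dexp_apply (q : ℕ) {t : ℕ} {κ : Type*} [DecidableEq κ] (f : Fin t → κ) (k : κ) :
    Dexp q f k = ∑ i : Fin t, if f i = k then q ^ (i : ℕ) else 0 := by
  rw [Dexp, Finsupp.finset_sum_apply]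
  apply Finset.sum_congr rfl
  intro i _
  rw [Finsupp.single_apply]

lemma Dexp_inj (hq : 2 ≤ q) {t : ℕ} {κ : Type*} [DecidableEq κ] {f f' : Fin t → κ}
    (hD : Dexp q f = Dexp q f') : f = f' := by
  have hsets : ∀ k : κ,
      (Finset.univ.filter (fun i : Fin t => f i = k)).image Fin.val
      = (Finset.univ.filter (fun i : Fin t => f' i = k)).image Fin.val := by
    intro k
    apply sum_pow_inj hq
    have h1 : ∀ (g : Fin t → κ),
        ∑ j ∈ (Finset.univ.filter (fun i : Fin t => g i = k)).image Fin.val, q ^ j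
          = Dexp q g k := by
      intro g
      rw [Finset.sum_image (fun a _ b _ h => Fin.val_injective h), Dexp_apply,
        Finset.sum_filter]
    rw [h1, h1, hD]
  funext i
  have hmem : (i : ℕ) ∈ (Finset.univ.filter (fun i' : Fin t => f i' = f i)).image Fin.val := by
    simp only [Finset.mem_image, Finset.mem_filter, Finset.mem_univ, true_and]
    exact ⟨i, rfl, rfl⟩
  rw [hsets (f i)] at hmem
  simp only [Finset.mem_image, Finset.mem_filter, Finset.mem_univ, true_and] at hmem
  obtain ⟨i', hi', hval⟩ := hmem
  have : i' = i := Fin.val_injective hval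
  rw [← this] at hi' ⊢
  exact hi'.symm

lemma alpha_vanish_imp_zero (ht : 1 ≤ t) (hq : 2 ≤ q)
    (hF : Fintype.card F = q ^ t)
    (P : Fin n → (Fin r → F))
    (hPall : ∀ v : Fin r → F, v ≠ 0 → ∃ i, ∃ c : F, v = c • P i)
    (lam : (Fin t → Fin r) → F)
    (hlam : ∀ i : Fin n, ∑ f : Fin t → Fin r,
        (∏ i' : Fin t, P i (f i') ^ q ^ (i' : ℕ)) * lam f = 0) :
    lam = 0 := by
  classical
  set σ' : Type u := ULift.{u} (Fin r) with hσ'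
  have hup : Function.Injective (ULift.up : Fin r → σ') := fun a b h => by
    cases h; rfl
  set D : (Fin t → Fin r) → (σ' →₀ ℕ) := fun f => Dexp q (fun i => ULift.up (f i)) with hD
  set Q : MvPolynomial σ' F :=
    ∑ f : Fin t → Fin r, MvPolynomial.monomial (D f) (lam f) with hQ
  have hQform : ∀ f : Fin t → Fin r, MvPolynomial.monomial (D f) (lam f)
      = MvPolynomial.C (lam f) * ∏ i : Fin t, MvPolynomial.X (ULift.up (f i)) ^ q ^ (i : ℕ) := by
    intro f
    rw [hD]
    unfold Dexp
    rw [MvPolynomial.monomial_sum_index]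
    congr 1
    apply Finset.prod_congr rfl
    intro i _
    rw [MvPolynomial.X_pow_eq_monomial]
  have hEval : ∀ v : Fin r → F, MvPolynomial.eval (fun k : σ' => v k.down) Q
      = ∑ f : Fin t → Fin r, lam f * ∏ i : Fin t, v (f i) ^ q ^ (i : ℕ) := by
    intro v
    rw [hQ, map_sum]
    apply Finset.sum_congr rfl
    intro f _
    rw [hQform, map_mul, MvPolynomial.eval_C, map_prod]
    congr 1
    apply Finset.prod_congr rfl
    intro i _
    rw [map_pow, MvPolynomial.eval_X]
  have hzero : ∀ w : σ' → F, MvPolynomial.eval w Q = 0 := by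
    intro w
    have hw : MvPolynomial.eval w Q = ∑ f : Fin t → Fin r,
        lam f * ∏ i : Fin t, (fun j : Fin r => w (ULift.up j)) (f i) ^ q ^ (i : ℕ) := by
      rw [← hEval (fun j : Fin r => w (ULift.up j))]
    rw [hw]
    set v : Fin r → F := fun j => w (ULift.up j) with hv
    by_cases hv0 : v = 0
    · apply Finset.sum_eq_zero
      intro f _
      rw [hv0]
      rw [Finset.prod_eq_zero (Finset.mem_univ (⟨0, ht⟩ : Fin t))]
      · ring
      · rw [Pi.zero_apply, zero_pow (pow_ne_zero _ (by omega))]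
    · obtain ⟨i, c, hvc⟩ := hPall v hv0
      have hterm : ∀ f : Fin t → Fin r, ∏ i' : Fin t, v (f i') ^ q ^ (i' : ℕ)
          = (∏ i' : Fin t, c ^ q ^ (i' : ℕ)) * ∏ i' : Fin t, P i (f i') ^ q ^ (i' : ℕ) := by
        intro f
        rw [← Finset.prod_mul_distrib]
        apply Finset.prod_congr rfl
        intro i' _
        rw [hvc, Pi.smul_apply, smul_eq_mul, mul_pow]
      calc ∑ f : Fin t → Fin r, lam f * ∏ i' : Fin t, v (f i') ^ q ^ (i' : ℕ)
          = (∏ i' : Fin t, c ^ q ^ (i' : ℕ)) * ∑ f : Fin t → Fin r,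
              (∏ i' : Fin t, P i (f i') ^ q ^ (i' : ℕ)) * lam f := by
            rw [Finset.mul_sum]
            apply Finset.sum_congr rfl
            intro f _
            rw [hterm f]; ring
        _ = 0 := by rw [hlam i, mul_zero]
  have hQmem : Q ∈ MvPolynomial.restrictDegree σ' F (Fintype.card F - 1) := by
    rw [MvPolynomial.mem_restrictDegree]
    intro s hs k
    have hsub := MvPolynomial.support_sum hs
    simp only [Finset.mem_biUnion, Finset.mem_univ, true_and] at hsub
    obtain ⟨f, hf⟩ := hsub
    have hsD : s = D f :=
      Finset.mem_singleton.mp (Finset.mem_of_subset MvPolynomial.support_monomial_subset hf)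
    rw [hsD, hD, Dexp_apply]
    have hb : (∑ i : Fin t, if ULift.up (f i) = k then q ^ (i:ℕ) else 0)
        ≤ ∑ i ∈ Finset.range t, q ^ i := by
      rw [← Fin.sum_univ_eq_sum_range (fun i => q ^ i) t]
      apply Finset.sum_le_sum
      intro i _
      split <;> simp
    have := mygeom_lt hq t
    rw [hF]
    omega
  have hQ0 : Q = 0 := by
    have hker := MvPolynomial.ker_evalₗ σ' F
    have hmem : (⟨Q, hQmem⟩ : MvPolynomial.R σ' F)
        ∈ LinearMap.ker (MvPolynomial.evalᵢ σ' F) := by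
      have : MvPolynomial.evalᵢ σ' F ⟨Q, hQmem⟩ = 0 := by
        funext w
        exact hzero w
      exact this
    rw [hker] at hmem
    exact congrArg Subtype.val hmem
  funext f
  have hco : MvPolynomial.coeff (D f) Q = lam f := by
    rw [hQ, MvPolynomial.coeff_sum]
    rw [Finset.sum_eq_single f]
    · rw [MvPolynomial.coeff_monomial, if_pos rfl]
    · intro f' _ hne
      rw [MvPolynomial.coeff_monomial, if_neg]
      intro h
      apply hne
      have := Dexp_inj hq h
      funext i
      exact hup (congrFun this i)
    · intro h; exact absurd (Finset.mem_univ f) h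
  rw [hQ0] at hco
  simp only [MvPolynomial.coeff_zero] at hco
  exact hco.symm
end


section
variable {F : Type*} [Field F]

lemma dot_single {r : ℕ} (k₀ : Fin r) (a : F) (z : Fin r → F) :
    ∑ k, (a • (Pi.single k₀ 1 : Fin r → F)) k * z k = a * z k₀ := by
  classical
  rw [Finset.sum_eq_single k₀]
  · simp
  · intro k _ hk
    rw [Pi.smul_apply, Pi.single_apply, if_neg hk, smul_zero, zero_mul]
  · intro h; exact absurd (Finset.mem_univ k₀) h

lemma exists_form0 {r : ℕ} (u : Fin r → F) (hu : u ≠ 0) :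
    ∃ b : Fin r → F, ∑ k, b k * u k ≠ 0 := by
  classical
  obtain ⟨k₀, hk₀⟩ := Function.ne_iff.mp hu
  refine ⟨(Pi.single k₀ 1 : Fin r → F), ?_⟩
  have := dot_single k₀ (1:F) u
  rw [one_smul] at this
  rw [this, one_mul]
  exact hk₀

lemma exists_form {r : ℕ} (u v : Fin r → F) (hu : u ≠ 0)
    (hprop : ∀ c : F, u ≠ c • v) :
    ∃ b : Fin r → F, (∑ k, b k * v k = 0) ∧ (∑ k, b k * u k ≠ 0) := by
  classical
  by_cases hv : v = 0
  · obtain ⟨b, hb⟩ := exists_form0 u hu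
    exact ⟨b, by simp [hv], hb⟩
  · obtain ⟨k₀, hk₀⟩ := Function.ne_iff.mp hv
    rw [Pi.zero_apply] at hk₀
    have h1 : u ≠ (u k₀ / v k₀) • v := hprop _
    obtain ⟨k₁, hk₁⟩ := Function.ne_iff.mp h1
    rw [Pi.smul_apply, smul_eq_mul] at hk₁
    have hkk : u k₁ * v k₀ ≠ v k₁ * u k₀ := by
      intro h
      apply hk₁
      field_simp
      linear_combination h
    set b : Fin r → F := (1:F) • (Pi.single k₁ 1 : Fin r → F) - (v k₁ / v k₀) • (Pi.single k₀ 1 : Fin r → F) with hb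
    have hdot : ∀ z : Fin r → F, ∑ k, b k * z k = z k₁ - (v k₁ / v k₀) * z k₀ := by
      intro z
      rw [hb]
      have : ∀ k, ((1:F) • (Pi.single k₁ 1 : Fin r → F) - (v k₁ / v k₀) • (Pi.single k₀ 1 : Fin r → F)) k * z k
          = ((1:F) • (Pi.single k₁ 1 : Fin r → F)) k * z k
            - ((v k₁ / v k₀) • (Pi.single k₀ 1 : Fin r → F)) k * z k := by
        intro k
        rw [Pi.sub_apply, sub_mul]
      rw [Finset.sum_congr rfl (fun k _ => this k), Finset.sum_sub_distrib,
        dot_single, dot_single, one_mul]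
    refine ⟨b, ?_, ?_⟩
    · rw [hdot]
      field_simp
      ring
    · rw [hdot]
      intro h
      apply hkk
      have h2 : u k₁ * v k₀ = (v k₁ / v k₀) * u k₀ * v k₀ := by
        rw [sub_eq_zero] at h
        rw [h]
      rw [h2]
      field_simp
end



section
variable {F : Type*} [Field F] [Fintype F] [DecidableEq F]
variable {q t r n : ℕ}

lemma contraction {p pk : ℕ} (hp : Fact p.Prime) (hc : CharP F p) (hq : q = p ^ pk)
    (d : Fin t → Fin r → F) (v : Fin r → F) :
    ∑ f : Fin t → Fin r, ∏ i : Fin t, (d i (f i) * v (f i)) ^ q ^ (i : ℕ)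
      = ∏ i : Fin t, (∑ j : Fin r, d i j * v j) ^ q ^ (i : ℕ) := by
  have h1 : ∀ i : Fin t, (∑ j : Fin r, d i j * v j) ^ q ^ (i : ℕ)
      = ∑ j : Fin r, (d i j * v j) ^ q ^ (i : ℕ) :=
    fun i => frob_sum hp hc hq _ _ _
  rw [Finset.prod_congr rfl (fun i _ => h1 i), Finset.prod_univ_sum, Fintype.piFinset_univ]

lemma lower_bound {p pk : ℕ} (hp : Fact p.Prime) (hc : CharP F p) (hqpk : q = p ^ pk)
    (ht : 1 ≤ t) (hq2 : 2 ≤ q)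
    (P : Fin n → (Fin r → F))
    (hP0 : ∀ i, P i ≠ 0)
    (hPdist : ∀ i j, i ≠ j → ∀ c : F, P i ≠ c • P j)
    (w : Fin n → F)
    (hsum : ∀ f : Fin t → Fin r,
        ∑ j : Fin n, w j * ∏ i : Fin t, P j (f i) ^ q ^ (i : ℕ) = 0)
    (hw : w ≠ 0) :
    t + 2 ≤ (Finset.univ.filter fun i => w i ≠ 0).card := by
  classical
  haveI : NeZero t := ⟨by omega⟩
  by_contra hcon
  set S : Finset (Fin n) := Finset.univ.filter (fun i => w i ≠ 0) with hS
  have hScard : S.card ≤ t + 1 := by omega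
  have hSne : S.Nonempty := by
    obtain ⟨i, hi⟩ := Function.ne_iff.mp hw
    exact ⟨i, Finset.mem_filter.mpr ⟨Finset.mem_univ i, by simpa using hi⟩⟩
  obtain ⟨i₁, hi₁⟩ := hSne
  have hwi₁ : w i₁ ≠ 0 := (Finset.mem_filter.mp hi₁).2
  have hwS : ∀ j : Fin n, j ∉ S → w j = 0 := by
    intro j hj
    by_contra hne
    exact hj (Finset.mem_filter.mpr ⟨Finset.mem_univ j, hne⟩)
  by_cases hS1 : S.erase i₁ = ∅
  · have hSsing : S = {i₁} := by
      rcases (Finset.erase_eq_empty_iff S i₁).mp hS1 with h | h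
      · exact absurd hi₁ (h ▸ Finset.notMem_empty i₁)
      · exact h
    obtain ⟨k₀, hk₀⟩ := Function.ne_iff.mp (hP0 i₁)
    rw [Pi.zero_apply] at hk₀
    have h0 := hsum (fun _ => k₀)
    rw [← Finset.sum_subset (Finset.subset_univ S)
      (fun j _ hj => by rw [hwS j hj, zero_mul])] at h0
    rw [hSsing, Finset.sum_singleton] at h0
    have hprod : ∏ i : Fin t, P i₁ k₀ ^ q ^ (i : ℕ) ≠ 0 :=
      Finset.prod_ne_zero_iff.mpr (fun i _ => pow_ne_zero _ hk₀)
    rcases mul_eq_zero.mp h0 with h | h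
    · exact hwi₁ h
    · exact hprod h
  · obtain ⟨i₂, hi₂⟩ := Finset.nonempty_of_ne_empty hS1
    have hne12 : i₂ ≠ i₁ := (Finset.mem_erase.mp hi₂).1
    have hi₂S : i₂ ∈ S := (Finset.mem_erase.mp hi₂).2
    set T : Finset (Fin n) := (S.erase i₁).erase i₂ with hT
    have hTcard : T.card ≤ t - 1 := by
      rw [hT, Finset.card_erase_of_mem hi₂, Finset.card_erase_of_mem hi₁]
      omega
    have hTne1 : ∀ s ∈ T, s ≠ i₁ := fun s hs =>
      (Finset.mem_erase.mp (Finset.mem_of_mem_erase hs)).1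
    have hTmem : ∀ j ∈ S, j ≠ i₁ → j ≠ i₂ → j ∈ T := by
      intro j hj h1 h2
      exact Finset.mem_erase.mpr ⟨h2, Finset.mem_erase.mpr ⟨h1, hj⟩⟩
    have hexf : ∀ s ∈ T, ∃ b : Fin r → F,
        (∑ k, b k * P s k = 0) ∧ (∑ k, b k * P i₁ k ≠ 0) := fun s hs =>
      exists_form (P i₁) (P s) (hP0 i₁) (hPdist i₁ s (Ne.symm (hTne1 s hs)))
    obtain ⟨b₀, hb₀⟩ := exists_form0 (P i₁) (hP0 i₁)
    set B : Fin n → (Fin r → F) := fun s =>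
      if hs : s ∈ T then (hexf s hs).choose else b₀ with hB
    have hBT0 : ∀ s ∈ T, ∑ k, B s k * P s k = 0 := by
      intro s hs
      rw [hB]; simp only [dif_pos hs]
      exact (hexf s hs).choose_spec.1
    have hBT1 : ∀ s : Fin n, ∑ k, B s k * P i₁ k ≠ 0 := by
      intro s
      rw [hB]
      by_cases hs : s ∈ T
      · simp only [dif_pos hs]; exact (hexf s hs).choose_spec.2
      · simp only [dif_neg hs]; exact hb₀
    set ν : Fin n → Fin t := fun s =>
      if hs : s ∈ T then ⟨((T.equivFin) ⟨s, hs⟩).val + 1, by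
        have := ((T.equivFin) ⟨s, hs⟩).isLt
        omega⟩ else ⟨0, by omega⟩ with hν
    have hν0 : ∀ s ∈ T, ν s ≠ 0 := by
      intro s hs
      rw [hν]
      simp only [dif_pos hs]
      intro h
      have := congrArg Fin.val h
      simp at this
    have hνinj : ∀ s ∈ T, ∀ s' ∈ T, ν s = ν s' → s = s' := by
      intro s hs s' hs' h
      rw [hν] at h
      simp only [dif_pos hs, dif_pos hs'] at h
      have hval : ((T.equivFin) ⟨s, hs⟩).val = ((T.equivFin) ⟨s', hs'⟩).val := by
        simpa using congrArg Fin.val h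
      exact congrArg Subtype.val (T.equivFin.injective (Fin.val_injective hval))
    set κ : Fin t → (Fin r → F) := fun i =>
      if h : ∃ s, s ∈ T ∧ ν s = i then B h.choose else b₀ with hκ
    have hκT : ∀ s ∈ T, κ (ν s) = B s := by
      intro s hs
      rw [hκ]
      have hex : ∃ s', s' ∈ T ∧ ν s' = ν s := ⟨s, hs, rfl⟩
      simp only [dif_pos hex]
      have hc1 := hex.choose_spec
      rw [hνinj _ hc1.1 _ hs hc1.2]
    have hκ1 : ∀ i : Fin t, ∑ k, κ i k * P i₁ k ≠ 0 := by
      intro i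
      rw [hκ]
      by_cases h : ∃ s, s ∈ T ∧ ν s = i
      · simp only [dif_pos h]; exact hBT1 _
      · simp only [dif_neg h]; exact hb₀
    set c : Fin n → F := fun j => w j *
      ∏ i ∈ Finset.univ.erase (0 : Fin t), (∑ k, κ i k * P j k) ^ q ^ (i : ℕ) with hcdef
    have hc_eq : ∀ j : Fin n, c j = w j *
      ∏ i ∈ Finset.univ.erase (0 : Fin t), (∑ k, κ i k * P j k) ^ q ^ (i : ℕ) := fun j => rfl
    have hkey : ∀ j₀ : Fin r, ∑ j : Fin n, c j * P j j₀ = 0 := by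
      intro j₀
      set d : Fin t → Fin r → F := fun i =>
        if i = (0 : Fin t) then (Pi.single j₀ 1 : Fin r → F) else κ i with hd
      have e1 : ∑ f : Fin t → Fin r, (∏ i : Fin t, (d i (f i)) ^ q ^ (i : ℕ)) *
          (∑ j : Fin n, w j * ∏ i : Fin t, P j (f i) ^ q ^ (i : ℕ)) = 0 :=
        Finset.sum_eq_zero (fun f _ => by rw [hsum f, mul_zero])
      have e2 : ∑ j : Fin n, w j * ∏ i : Fin t,
          (∑ k, d i k * P j k) ^ q ^ (i : ℕ) = 0 := by
        calc ∑ j : Fin n, w j * ∏ i : Fin t, (∑ k, d i k * P j k) ^ q ^ (i : ℕ)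
            = ∑ j : Fin n, ∑ f : Fin t → Fin r,
                w j * ∏ i : Fin t, (d i (f i) * P j (f i)) ^ q ^ (i : ℕ) := by
              refine Finset.sum_congr rfl (fun j _ => ?_)
              rw [← contraction hp hc hqpk d (P j), Finset.mul_sum]
          _ = ∑ f : Fin t → Fin r, ∑ j : Fin n,
                (∏ i : Fin t, (d i (f i)) ^ q ^ (i : ℕ)) *
                  (w j * ∏ i : Fin t, P j (f i) ^ q ^ (i : ℕ)) := by
              rw [Finset.sum_comm]
              refine Finset.sum_congr rfl (fun f _ => Finset.sum_congr rfl (fun j _ => ?_))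
              have hsplit : ∏ i : Fin t, (d i (f i) * P j (f i)) ^ q ^ (i : ℕ)
                  = (∏ i : Fin t, (d i (f i)) ^ q ^ (i : ℕ))
                    * ∏ i : Fin t, P j (f i) ^ q ^ (i : ℕ) := by
                rw [← Finset.prod_mul_distrib]
                exact Finset.prod_congr rfl (fun i _ => mul_pow _ _ _)
              rw [hsplit]; ring
          _ = ∑ f : Fin t → Fin r, (∏ i : Fin t, (d i (f i)) ^ q ^ (i : ℕ)) *
                (∑ j : Fin n, w j * ∏ i : Fin t, P j (f i) ^ q ^ (i : ℕ)) := by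
              refine Finset.sum_congr rfl (fun f _ => ?_)
              rw [Finset.mul_sum]
          _ = 0 := e1
      rw [← e2]
      refine Finset.sum_congr rfl (fun j _ => ?_)
      -- c j * P j j₀ = w j * ∏_i (...)^q^i
      have e3 : ∏ i : Fin t, (∑ k, d i k * P j k) ^ q ^ (i : ℕ)
          = P j j₀ * ∏ i ∈ Finset.univ.erase (0 : Fin t),
              (∑ k, κ i k * P j k) ^ q ^ (i : ℕ) := by
        rw [← Finset.mul_prod_erase Finset.univ _ (Finset.mem_univ (0 : Fin t))]
        congr 1
        · have hd0 : d (0 : Fin t) = (Pi.single j₀ 1 : Fin r → F) := by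
            rw [hd]; simp
          rw [hd0]
          have : ∑ k, (Pi.single j₀ 1 : Fin r → F) k * P j k = P j j₀ := by
            rw [Finset.sum_eq_single j₀]
            · simp
            · intro k _ hk
              rw [Pi.single_apply, if_neg hk, zero_mul]
            · intro h; exact absurd (Finset.mem_univ j₀) h
          rw [this]
          norm_num
        · refine Finset.prod_congr rfl (fun i hi => ?_)
          have : d i = κ i := by
            rw [hd]; simp [(Finset.mem_erase.mp hi).1]
          rw [this]
      rw [hc_eq j, e3]
      ring
    -- reduce to the pair {i₁, i₂}
    have hpair : ∀ j₀ : Fin r, c i₁ * P i₁ j₀ + c i₂ * P i₂ j₀ = 0 := by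
      intro j₀
      have h0 := hkey j₀
      rw [← Finset.sum_subset (Finset.subset_univ ({i₁, i₂} : Finset (Fin n)))
        (fun j _ hj => ?_)] at h0
      · rwa [Finset.sum_pair (Ne.symm hne12)] at h0
      · simp only [Finset.mem_insert, Finset.mem_singleton, not_or] at hj
        obtain ⟨hj1, hj2⟩ := hj
        by_cases hjS : j ∈ S
        · have hjT : j ∈ T := hTmem j hjS hj1 hj2
          have hz : (∑ k, κ (ν j) k * P j k) = 0 := by
            rw [hκT j hjT]
            exact hBT0 j hjT
          have hcj : c j = 0 := by
            rw [hc_eq j]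
            rw [Finset.prod_eq_zero (Finset.mem_erase.mpr ⟨hν0 j hjT, Finset.mem_univ _⟩)]
            · rw [mul_zero]
            · rw [hz, zero_pow]
              positivity
          rw [hcj, zero_mul]
        · rw [hc_eq j, hwS j hjS, zero_mul, zero_mul]
    have hc1ne : c i₁ ≠ 0 := by
      rw [hc_eq i₁]
      apply mul_ne_zero hwi₁
      exact Finset.prod_ne_zero_iff.mpr (fun i _ => pow_ne_zero _ (hκ1 i))
    have hfinal : P i₁ = (-(c i₂) * (c i₁)⁻¹) • P i₂ := by
      funext j₀
      rw [Pi.smul_apply, smul_eq_mul]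
      have h0 := hpair j₀
      field_simp
      linear_combination h0
    exact hPdist i₁ i₂ (Ne.symm hne12) _ hfinal
end



section
variable {F : Type*} [Field F] [Fintype F] [DecidableEq F]
variable {q t r n : ℕ}

lemma exists_codeword (ht : 1 ≤ t) (hr : 2 ≤ r) (htq : t < q) (hq2 : 2 ≤ q)
    (hF : Fintype.card F = q ^ t)
    (P : Fin n → (Fin r → F))
    (hPall : ∀ v : Fin r → F, v ≠ 0 → ∃ i, ∃ c : F, v = c • P i) :
    ∃ w : Fin n → F,
      (∀ f : Fin t → Fin r, ∑ i : Fin n, w i * ∏ i' : Fin t, P i (f i') ^ q ^ (i' : ℕ) = 0)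
      ∧ w ≠ 0 ∧ (Finset.univ.filter fun i => w i ≠ 0).card = t + 2 := by
  classical
  obtain ⟨c, hcinj, hcfix⟩ := exists_fixed F ht hq2 htq hF
  set k0 : Fin r := ⟨0, by omega⟩ with hk0
  set k1 : Fin r := ⟨1, by omega⟩ with hk1
  have hk01 : k0 ≠ k1 := by
    intro h
    have := congrArg Fin.val h
    simp [hk0, hk1] at this
  set u : Fin (t+1) → Fin r → F :=
    fun j k => if k = k0 then 1 else if k = k1 then c j else 0 with hu
  set uinf : Fin r → F := fun k => if k = k1 then 1 else 0 with huinf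
  have hu0 : ∀ j, u j ≠ 0 := by
    intro j h
    have := congrFun h k0
    simp [hu] at this
  have huinf0 : uinf ≠ 0 := by
    intro h
    have := congrFun h k1
    simp [huinf] at this
  choose ι e he using fun j => hPall (u j) (hu0 j)
  obtain ⟨iinf, einf, heinf⟩ := hPall uinf huinf0
  have hej : ∀ j, e j ≠ 0 := by
    intro j h
    have := congrFun (he j) k0
    rw [h] at this
    simp [hu] at this
  have heinf0 : einf ≠ 0 := by
    intro h
    have := congrFun heinf k1
    rw [h] at this
    simp [huinf, hk01] at this
  -- distinctness of indices
  have hratio : ∀ j j', ι j = ι j' → u j = (e j * (e j')⁻¹) • u j' := by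
    intro j j' hII
    rw [he j, he j', hII, smul_smul]
    congr 1
    rw [mul_assoc, inv_mul_cancel₀ (hej j'), mul_one]
  have hιinj : Function.Injective ι := by
    intro j j' hII
    have h1 := congrFun (hratio j j' hII) k0
    simp only [hu, Pi.smul_apply, smul_eq_mul, eq_self_iff_true, if_true, mul_one] at h1
    have h2 := congrFun (hratio j j' hII) k1
    simp only [hu, Pi.smul_apply, smul_eq_mul, eq_self_iff_true, if_true] at h2
    rw [← h1, one_mul] at h2
    exact hcinj h2
  have hιinf : ∀ j, ι j ≠ iinf := by
    intro j hII
    have : u j = (e j * einf⁻¹) • uinf := by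
      rw [he j, heinf, hII, smul_smul]
      congr 1
      rw [mul_assoc, inv_mul_cancel₀ heinf0, mul_one]
    have h1 := congrFun this k0
    simp [hu, huinf, Pi.smul_apply, hk01] at h1
  -- weights
  set L : Fin (t+1) → F := fun j => ∏ l ∈ Finset.univ.erase j, (c j - c l)⁻¹ with hL
  have hLne : ∀ j, L j ≠ 0 := by
    intro j
    rw [hL]
    apply Finset.prod_ne_zero_iff.mpr
    intro l hl
    exact inv_ne_zero (sub_ne_zero_of_ne (fun h => (Finset.mem_erase.mp hl).1 (hcinj h).symm))
  set E : F → F := fun x => ∏ i : Fin t, x ^ q ^ (i : ℕ) with hE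
  have hEne : ∀ x : F, x ≠ 0 → E x ≠ 0 := by
    intro x hx
    rw [hE]
    exact Finset.prod_ne_zero_iff.mpr (fun i _ => pow_ne_zero _ hx)
  have halpha_smul : ∀ (a : F) (v : Fin r → F) (f : Fin t → Fin r),
      ∏ i' : Fin t, (a • v) (f i') ^ q ^ (i' : ℕ)
        = E a * ∏ i' : Fin t, v (f i') ^ q ^ (i' : ℕ) := by
    intro a v f
    rw [hE, ← Finset.prod_mul_distrib]
    exact Finset.prod_congr rfl (fun i _ => by
      rw [Pi.smul_apply, smul_eq_mul, mul_pow])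
  set w : Fin n → F := fun i =>
    if h : ∃ j, ι j = i then L h.choose * E (e h.choose)
    else if i = iinf then -(E einf) else 0 with hw
  have hwι : ∀ j, w (ι j) = L j * E (e j) := by
    intro j
    rw [hw]
    have hex : ∃ j', ι j' = ι j := ⟨j, rfl⟩
    simp only [dif_pos hex]
    rw [hιinj hex.choose_spec]
  have hwinf : w iinf = -(E einf) := by
    rw [hw]
    have hnex : ¬ ∃ j, ι j = iinf := fun ⟨j, hj⟩ => hιinf j hj
    simp only [dif_neg hnex, eq_self_iff_true, if_true]
  have hwother : ∀ i, (¬ ∃ j, ι j = i) → i ≠ iinf → w i = 0 := by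
    intro i h1 h2
    rw [hw]
    simp only [dif_neg h1, if_neg h2]
  -- support
  have hsupp : (Finset.univ.filter fun i => w i ≠ 0)
      = insert iinf (Finset.univ.image ι) := by
    ext i
    simp only [Finset.mem_filter, Finset.mem_univ, true_and, Finset.mem_insert,
      Finset.mem_image]
    constructor
    · intro hi
      by_cases h1 : ∃ j, ι j = i
      · exact Or.inr ⟨h1.choose, h1.choose_spec⟩
      · by_cases h2 : i = iinf
        · exact Or.inl h2
        · exact absurd (hwother i h1 h2) hi
    · rintro (rfl | ⟨j, rfl⟩)
      · rw [hwinf]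
        exact neg_ne_zero.mpr (hEne _ heinf0)
      · rw [hwι]
        exact mul_ne_zero (hLne j) (hEne _ (hej j))
  have hinf_not_mem : iinf ∉ Finset.univ.image ι := by
    simp only [Finset.mem_image, not_exists, not_and]
    intro j _
    exact hιinf j
  have hcard : (Finset.univ.filter fun i => w i ≠ 0).card = t + 2 := by
    rw [hsupp, Finset.card_insert_of_notMem hinf_not_mem,
      Finset.card_image_of_injective _ hιinj]
    simp
  have hwne : w ≠ 0 := by
    intro h
    have : w iinf = 0 := by rw [h]; rfl
    rw [hwinf] at this
    exact (hEne _ heinf0) (neg_eq_zero.mp this)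
  refine ⟨w, ?_, hwne, hcard⟩
  -- the codeword property
  intro f
  have hsub : ∑ i : Fin n, w i * ∏ i' : Fin t, P i (f i') ^ q ^ (i' : ℕ)
      = ∑ i ∈ insert iinf (Finset.univ.image ι),
          w i * ∏ i' : Fin t, P i (f i') ^ q ^ (i' : ℕ) := by
    rw [← hsupp]
    refine (Finset.sum_subset (Finset.subset_univ _) (fun i _ hi => ?_)).symm
    have : w i = 0 := by
      by_contra hne
      exact hi (Finset.mem_filter.mpr ⟨Finset.mem_univ i, hne⟩)
    rw [this, zero_mul]
  rw [hsub, Finset.sum_insert hinf_not_mem,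
    Finset.sum_image (fun a _ b _ h => hιinj h)]
  -- rewrite each term via u
  have hterm : ∀ j, w (ι j) * ∏ i' : Fin t, P (ι j) (f i') ^ q ^ (i' : ℕ)
      = L j * ∏ i' : Fin t, u j (f i') ^ q ^ (i' : ℕ) := by
    intro j
    have : ∏ i' : Fin t, u j (f i') ^ q ^ (i' : ℕ)
        = E (e j) * ∏ i' : Fin t, P (ι j) (f i') ^ q ^ (i' : ℕ) := by
      conv_lhs => rw [he j]
      exact halpha_smul _ _ f
    rw [hwι j, this]
    ring
  have hterminf : w iinf * ∏ i' : Fin t, P iinf (f i') ^ q ^ (i' : ℕ)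
      = -(∏ i' : Fin t, uinf (f i') ^ q ^ (i' : ℕ)) := by
    have : ∏ i' : Fin t, uinf (f i') ^ q ^ (i' : ℕ)
        = E einf * ∏ i' : Fin t, P iinf (f i') ^ q ^ (i' : ℕ) := by
      conv_lhs => rw [heinf]
      exact halpha_smul _ _ f
    rw [hwinf, this]
    ring
  rw [hterminf, Finset.sum_congr rfl (fun j _ => hterm j)]
  -- the main identity
  have hmain : ∑ j : Fin (t+1), L j * ∏ i' : Fin t, u j (f i') ^ q ^ (i' : ℕ)
      = ∏ i' : Fin t, uinf (f i') ^ q ^ (i' : ℕ) := by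
    by_cases hin : ∀ i', f i' = k0 ∨ f i' = k1
    · set K : ℕ := (Finset.univ.filter fun i' : Fin t => f i' = k1).card with hK
      have hKle : K ≤ t := by
        rw [hK]
        calc (Finset.univ.filter fun i' : Fin t => f i' = k1).card
            ≤ (Finset.univ : Finset (Fin t)).card := Finset.card_filter_le _ _
          _ = t := by simp
      have hAj : ∀ j, ∏ i' : Fin t, u j (f i') ^ q ^ (i' : ℕ) = c j ^ K := by
        intro j
        have hfac : ∀ i' : Fin t, u j (f i') ^ q ^ (i' : ℕ)
            = if f i' = k1 then c j else 1 := by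
          intro i'
          rcases hin i' with h | h
          · rw [if_neg (by rw [h]; exact hk01)]
            have hval : u j (f i') = 1 := by rw [h]; simp [hu]
            rw [hval, one_pow]
          · rw [if_pos h]
            have hval : u j (f i') = c j := by rw [h]; simp [hu, Ne.symm hk01]
            rw [hval]
            exact pow_q_pow_fixed (hcfix j) _
        rw [Finset.prod_congr rfl (fun i' _ => hfac i')]
        rw [← Finset.prod_filter_mul_prod_filter_not Finset.univ (fun i' => f i' = k1)]
        rw [Finset.prod_congr rfl (fun i' hi' => if_pos (Finset.mem_filter.mp hi').2),
          Finset.prod_const]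
        rw [Finset.prod_congr rfl (fun i' hi' => if_neg (Finset.mem_filter.mp hi').2),
          Finset.prod_const, one_pow, mul_one, hK]
      have hAinf : ∏ i' : Fin t, uinf (f i') ^ q ^ (i' : ℕ)
          = if K = t then 1 else 0 := by
        by_cases hall : ∀ i', f i' = k1
        · have hKt : K = t := by
            rw [hK]
            have : (Finset.univ.filter fun i' : Fin t => f i' = k1) = Finset.univ := by
              apply Finset.filter_true_of_mem
              intro i' _
              exact hall i'
            rw [this]
            simp
          rw [if_pos hKt]
          apply Finset.prod_eq_one
          intro i' _
          simp only [huinf]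
          rw [if_pos (hall i'), one_pow]
        · push_neg at hall
          obtain ⟨i₀, hi₀⟩ := hall
          have hKt : K ≠ t := by
            rw [hK]
            intro hEq
            have : (Finset.univ.filter fun i' : Fin t => f i' = k1) = Finset.univ := by
              apply Finset.eq_univ_of_card
              rw [hEq]; simp
            have := Finset.mem_filter.mp (this ▸ Finset.mem_univ i₀)
            exact hi₀ this.2
          rw [if_neg hKt]
          apply Finset.prod_eq_zero (Finset.mem_univ i₀)
          simp only [huinf]
          rw [if_neg hi₀]
          exact zero_pow (by positivity)
      rw [hAinf, Finset.sum_congr rfl (fun j _ => by rw [hAj j])]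
      exact lagrange_sum c hcinj K hKle
    · push_neg at hin
      obtain ⟨i₀, h0, h1⟩ := hin
      have hz : ∀ j, ∏ i' : Fin t, u j (f i') ^ q ^ (i' : ℕ) = 0 := by
        intro j
        apply Finset.prod_eq_zero (Finset.mem_univ i₀)
        simp only [hu]
        rw [if_neg h0, if_neg h1]
        exact zero_pow (by positivity)
      have hzinf : ∏ i' : Fin t, uinf (f i') ^ q ^ (i' : ℕ) = 0 := by
        apply Finset.prod_eq_zero (Finset.mem_univ i₀)
        simp only [huinf]
        rw [if_neg h1]
        exact zero_pow (by positivity)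
      rw [hzinf, Finset.sum_congr rfl (fun j _ => by rw [hz j])]
      simp
  rw [hmain]
  ring
end

/-- **Parameters of `C_{r,t}`.** Assume `t < q`. There is a nonzero codeword of
Hamming weight exactly `t + 2`; together with the lower bound, the minimum distance
of `C_{r,t}` is exactly `t + 2`, and `C_{r,t}` has parameters `[n, n - r^t, t + 2]`. -/
theorem stmt_9
    (q t r n : ℕ) (ht : 1 ≤ t) (hr : 2 ≤ r) (hq : t < q)
    (F : Type*) [Field F] [Fintype F] [DecidableEq F]
    (hF : Fintype.card F = q ^ t)
    (α : (Fin r → F) → (Fin t → Fin r) → F)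
    (hα : ∀ v f, α v f = ∏ i : Fin t, v (f i) ^ q ^ (i : ℕ))
    (hn : n = (q ^ (r * t) - 1) / (q ^ t - 1))
    (P : Fin n → (Fin r → F))
    (hP0 : ∀ i, P i ≠ 0)
    (hPdist : ∀ i j, i ≠ j → ∀ c : F, P i ≠ c • P j)
    (hPall : ∀ v : Fin r → F, v ≠ 0 → ∃ i, ∃ c : F, v = c • P i) :
    (∃ w : Fin n → F, ∑ i, w i • α (P i) = 0 ∧ w ≠ 0 ∧
        (Finset.univ.filter fun i => w i ≠ 0).card = t + 2) ∧
    (∀ w : Fin n → F, ∑ i, w i • α (P i) = 0 → w ≠ 0 →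
        t + 2 ≤ (Finset.univ.filter fun i => w i ≠ 0).card) ∧
    Module.finrank F
      ↥(LinearMap.ker (Fintype.linearCombination F (fun i => α (P i))))
      = n - r ^ t := by
  classical
  have hq2 : 2 ≤ q := by omega
  obtain ⟨p, pk, hpprime, hchar, hqpk⟩ := exists_char_pow F ht hF
  haveI hpfact : Fact p.Prime := ⟨hpprime⟩
  refine ⟨?_, ?_, ?_⟩
  · -- existence of weight t+2 codeword
    obtain ⟨w, hwsum, hwne, hwcard⟩ := exists_codeword ht hr hq hq2 hF P hPall
    refine ⟨w, ?_, hwne, hwcard⟩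
    funext f
    rw [Finset.sum_apply, Pi.zero_apply]
    have hstep : ∑ i : Fin n, (w i • α (P i)) f
        = ∑ i : Fin n, w i * ∏ i' : Fin t, P i (f i') ^ q ^ (i' : ℕ) := by
      apply Finset.sum_congr rfl
      intro i _
      rw [Pi.smul_apply, smul_eq_mul, hα]
    rw [hstep]
    exact hwsum f
  · -- lower bound
    intro w hsum hwne
    apply lower_bound hpfact hchar hqpk ht hq2 P hP0 hPdist w _ hwne
    intro f
    have h0 := congrFun hsum f
    rw [Finset.sum_apply, Pi.zero_apply] at h0
    rw [← h0]
    apply Finset.sum_congr rfl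
    intro i _
    rw [Pi.smul_apply, smul_eq_mul, hα]
  · -- dimension
    set A : Matrix (Fin n) (Fin t → Fin r) F := Matrix.of (fun i f => α (P i) f) with hA
    have hM : (Fintype.linearCombination F (fun i => α (P i)))
        = A.transpose.mulVecLin := by
      apply LinearMap.ext
      intro w
      funext f
      rw [Fintype.linearCombination_apply, Finset.sum_apply,
        Matrix.mulVecLin_apply]
      rw [Matrix.mulVec, dotProduct]
      apply Finset.sum_congr rfl
      intro i _
      rw [Pi.smul_apply, smul_eq_mul, Matrix.transpose_apply, hA]
      rw [Matrix.of_apply, mul_comm]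
    have hinj : Function.Injective (Matrix.mulVecLin A) := by
      rw [← LinearMap.ker_eq_bot]
      rw [LinearMap.ker_eq_bot']
      intro lam hlam
      apply alpha_vanish_imp_zero ht hq2 hF P hPall lam
      intro i
      have h0 := congrFun hlam i
      rw [Matrix.mulVecLin_apply, Matrix.mulVec, dotProduct, Pi.zero_apply] at h0
      rw [← h0]
      apply Finset.sum_congr rfl
      intro f _
      rw [hA, Matrix.of_apply, hα]
    have hrankA : A.rank = r ^ t := by
      rw [Matrix.rank]
      rw [LinearMap.finrank_range_of_inj hinj]
      rw [Module.finrank_fintype_fun_eq_card, Fintype.card_fun]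
      simp
    have hrk := LinearMap.finrank_range_add_finrank_ker
      (Fintype.linearCombination F (fun i => α (P i)))
    have hrange : Module.finrank F
        ↥(LinearMap.range (Fintype.linearCombination F (fun i => α (P i)))) = r ^ t := by
      rw [hM]
      have : Module.finrank F ↥(LinearMap.range A.transpose.mulVecLin) = A.transpose.rank := rfl
      rw [this, Matrix.rank_transpose, hrankA]
    rw [hrange, Module.finrank_fintype_fun_eq_card, Fintype.card_fin] at hrk
    omega
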